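/- arXiv:1609.06066 — 5 statements merged into one kernel-verified Lean document; each statement's English description precedes it below -/
import Mathlib

section
/- Let K ⊆ L ⊆ M be complete discretely valued fields with M/L and L/K finite, separable, totally ramified extensions (with the same perfect residue field). Then ρ_{L/K} ≤ ρ_{M/K} ≤ ρ_{L/K} + ⌈ρ_{M/L} / e_{L/K}⌉. -/
/-!
The different is multiplicative in towers, `𝔇_{M/K} = 𝔇_{M/L} · 𝔇_{L/K} 𝒪_M`, so
`d_{M/K} = e_{M/L} d_{L/K} + d_{M/L}`; together with Dedekind's bound `d_{M/L} ≥ e_{M/L} - 1`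
both inequalities become elementary estimates for ceilings of rational numbers.
-/

attribute [local instance] FractionRing.liftAlgebra

noncomputable def rhoOf (d e : ℕ) : ℤ := ⌈((d : ℚ) + 1) / (e : ℚ)⌉ - 1

lemma rhoOf_add_one (d e : ℕ) : rhoOf d e + 1 = ⌈((d : ℚ) + 1) / e⌉ :=
  sub_add_cancel _ _

lemma rhoOf_le_rhoOf_tower {d₁ d₂ e₁ e₂ : ℕ} (he₁ : 0 < e₁) (he₂ : 0 < e₂)
    (h : e₂ ≤ d₂ + 1) : rhoOf d₁ e₁ ≤ rhoOf (e₂ * d₁ + d₂) (e₁ * e₂) := by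
  unfold rhoOf
  gcongr ⌈?_⌉ - 1
  rw [div_le_div_iff₀ (by positivity) (by positivity)]
  push_cast
  have : (e₂ : ℚ) ≤ d₂ + 1 := by exact_mod_cast h
  nlinarith

lemma rhoOf_tower_le {d₁ d₂ e₁ e₂ : ℕ} (he₁ : 0 < e₁) (he₂ : 0 < e₂) :
    rhoOf (e₂ * d₁ + d₂) (e₁ * e₂) ≤ rhoOf d₁ e₁ + ⌈(rhoOf d₂ e₂ : ℚ) / e₁⌉ := by
  have hρ₂ : (d₂ : ℚ) + 1 ≤ (rhoOf d₂ e₂ + 1) * e₂ := by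
    rw [← div_le_iff₀ (by positivity)]
    exact_mod_cast (rhoOf_add_one d₂ e₂).symm ▸ Int.le_ceil _
  have hle : (((e₂ * d₁ + d₂ : ℕ) : ℚ) + 1) / (e₁ * e₂ : ℕ)
      ≤ ((d₁ : ℚ) + 1) / e₁ + (rhoOf d₂ e₂ : ℚ) / e₁ := by
    rw [← add_div, div_le_div_iff₀ (by positivity) (by positivity)]
    push_cast
    nlinarith
  have hceil := Int.ceil_mono hle
  have hadd := Int.ceil_add_le (((d₁ : ℚ) + 1) / e₁) ((rhoOf d₂ e₂ : ℚ) / e₁)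
  rw [← rhoOf_add_one] at hceil hadd
  linarith

open IsLocalRing

namespace IsDiscreteValuationRing

variable {R : Type*} [CommRing R] [IsDomain R] [IsDiscreteValuationRing R]

lemma maximalIdeal_pow_dvd_pow_iff {m n : ℕ} :
    IsLocalRing.maximalIdeal R ^ m ∣ IsLocalRing.maximalIdeal R ^ n ↔ m ≤ n :=
  pow_dvd_pow_iff (by simpa using not_a_field R)
    fun h ↦ (IsLocalRing.maximalIdeal.isMaximal R).ne_top (Ideal.isUnit_iff.mp h)

lemma maximalIdeal_pow_inj {m n : ℕ} :
    IsLocalRing.maximalIdeal R ^ m = IsLocalRing.maximalIdeal R ^ n ↔ m = n :=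
  ⟨fun h ↦ le_antisymm (maximalIdeal_pow_dvd_pow_iff.mp h.dvd)
    (maximalIdeal_pow_dvd_pow_iff.mp h.symm.dvd), congrArg _⟩

end IsDiscreteValuationRing

lemma ramificationIdx_le_differentExponent_add_one
    (B C : Type*) [CommRing B] [CommRing C] [IsDomain B] [IsDomain C]
    [IsDiscreteValuationRing B] [IsDiscreteValuationRing C] [Algebra B C]
    [NoZeroSMulDivisors B C] [Module.Finite B C]
    [Algebra.IsSeparable (FractionRing B) (FractionRing C)] {e d : ℕ}
    (he : (maximalIdeal B).map (algebraMap B C) = maximalIdeal C ^ e)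
    (hd : differentIdeal B C = maximalIdeal C ^ d) : e ≤ d + 1 := by
  have := pow_sub_one_dvd_differentIdeal B (maximalIdeal C) e
    (IsDiscreteValuationRing.not_a_field B) he.symm.dvd
  rw [hd, IsDiscreteValuationRing.maximalIdeal_pow_dvd_pow_iff] at this
  omega

lemma differentExponent_tower
    (A B C : Type*) [CommRing A] [CommRing B] [CommRing C] [IsDedekindDomain A]
    [IsDomain B] [IsDomain C] [IsDiscreteValuationRing B] [IsDiscreteValuationRing C]
    [Algebra A B] [Algebra B C] [Algebra A C] [IsScalarTower A B C]
    [NoZeroSMulDivisors A B] [NoZeroSMulDivisors B C] [NoZeroSMulDivisors A C]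
    [Module.Finite A B] [Module.Finite B C]
    [Algebra.IsSeparable (FractionRing A) (FractionRing B)]
    [Algebra.IsSeparable (FractionRing B) (FractionRing C)] {e₂ d₁ d₂ d : ℕ}
    (he₂ : (maximalIdeal B).map (algebraMap B C) = maximalIdeal C ^ e₂)
    (hd₁ : differentIdeal A B = maximalIdeal B ^ d₁)
    (hd₂ : differentIdeal B C = maximalIdeal C ^ d₂)
    (hd : differentIdeal A C = maximalIdeal C ^ d) : d = e₂ * d₁ + d₂ := by
  have : Module.Finite A C := .trans B C
  have : Algebra.IsSeparable (FractionRing A) (FractionRing C) :=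
    .trans (FractionRing A) (FractionRing B) (FractionRing C)
  have := differentIdeal_eq_differentIdeal_mul_differentIdeal A B C
  rw [hd, hd₂, hd₁, Ideal.map_pow, he₂, ← pow_mul, ← pow_add,
    IsDiscreteValuationRing.maximalIdeal_pow_inj] at this
  omega

open IsLocalRing in
theorem stmt_0_general
    (A B C : Type*) [CommRing A] [CommRing B] [CommRing C]
    [IsDomain A] [IsDomain B] [IsDomain C]
    [IsDiscreteValuationRing A] [IsDiscreteValuationRing B] [IsDiscreteValuationRing C]
    [Algebra A B] [Algebra B C] [Algebra A C] [IsScalarTower A B C]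
    [NoZeroSMulDivisors A B] [NoZeroSMulDivisors B C] [NoZeroSMulDivisors A C]
    [Module.Finite A B] [Module.Finite B C]
    [Algebra.IsSeparable (FractionRing A) (FractionRing B)]
    [Algebra.IsSeparable (FractionRing B) (FractionRing C)]
    (eBA eCB dBA dCB dCA : ℕ)
    (he₂ : (maximalIdeal B).map (algebraMap B C) = maximalIdeal C ^ eCB)
    (htot₁ : eBA = Module.finrank (FractionRing A) (FractionRing B))
    (htot₂ : eCB = Module.finrank (FractionRing B) (FractionRing C))
    (hd₁ : differentIdeal A B = maximalIdeal B ^ dBA)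
    (hd₂ : differentIdeal B C = maximalIdeal C ^ dCB)
    (hd₃ : differentIdeal A C = maximalIdeal C ^ dCA) :
    rhoOf dBA eBA ≤ rhoOf dCA (eBA * eCB) ∧
      rhoOf dCA (eBA * eCB) ≤ rhoOf dBA eBA + ⌈((rhoOf dCB eCB : ℚ)) / (eBA : ℚ)⌉ := by
  have he₁_pos : 0 < eBA := htot₁ ▸ Module.finrank_pos
  have he₂_pos : 0 < eCB := htot₂ ▸ Module.finrank_pos
  rw [differentExponent_tower A B C he₂ hd₁ hd₂ hd₃]
  exact ⟨rhoOf_le_rhoOf_tower he₁_pos he₂_pos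
      (ramificationIdx_le_differentExponent_add_one B C he₂ hd₂),
    rhoOf_tower_le he₁_pos he₂_pos⟩

open IsLocalRing in
/-- Let `K ⊆ L ⊆ M` be complete discretely valued fields with `M/L` and `L/K`
finite separable totally ramified extensions with the same perfect residue field (encoded via
their rings of integers `A ⊆ B ⊆ C`, complete DVRs with bijective residue maps, with finite
separable extensions of fraction fields, ramification indices `eBA`, `eCB` equal to the degrees,
and different exponents `dBA = v_L(𝔇_{L/K})`, `dCB = v_M(𝔇_{M/L})`, `dCA = v_M(𝔇_{M/K})`).
Then `ρ_{L/K} ≤ ρ_{M/K} ≤ ρ_{L/K} + ⌈ρ_{M/L}/e_{L/K}⌉`, where `ρ = ⌈(d+1)/e⌉ - 1`. -/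
theorem stmt_0
    (A B C : Type*) [CommRing A] [CommRing B] [CommRing C]
    [IsDomain A] [IsDomain B] [IsDomain C]
    [IsDiscreteValuationRing A] [IsDiscreteValuationRing B] [IsDiscreteValuationRing C]
    [IsAdicComplete (maximalIdeal A) A] [IsAdicComplete (maximalIdeal B) B]
    [IsAdicComplete (maximalIdeal C) C]
    [Algebra A B] [Algebra B C] [Algebra A C] [IsScalarTower A B C]
    [NoZeroSMulDivisors A B] [NoZeroSMulDivisors B C] [NoZeroSMulDivisors A C]
    [Module.Finite A B] [Module.Finite B C]
    [IsLocalHom (algebraMap A B)] [IsLocalHom (algebraMap B C)]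
    (hres₁ : Function.Bijective (ResidueField.map (algebraMap A B)))
    (hres₂ : Function.Bijective (ResidueField.map (algebraMap B C)))
    [PerfectField (ResidueField A)]
    [Algebra.IsSeparable (FractionRing A) (FractionRing B)]
    [Algebra.IsSeparable (FractionRing B) (FractionRing C)]
    (eBA eCB dBA dCB dCA : ℕ)
    (he₁ : (maximalIdeal A).map (algebraMap A B) = maximalIdeal B ^ eBA)
    (he₂ : (maximalIdeal B).map (algebraMap B C) = maximalIdeal C ^ eCB)
    (htot₁ : eBA = Module.finrank (FractionRing A) (FractionRing B))
    (htot₂ : eCB = Module.finrank (FractionRing B) (FractionRing C))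
    (hd₁ : differentIdeal A B = maximalIdeal B ^ dBA)
    (hd₂ : differentIdeal B C = maximalIdeal C ^ dCB)
    (hd₃ : differentIdeal A C = maximalIdeal C ^ dCA) :
    rhoOf dBA eBA ≤ rhoOf dCA (eBA * eCB) ∧
      rhoOf dCA (eBA * eCB) ≤ rhoOf dBA eBA + ⌈((rhoOf dCB eCB : ℚ)) / (eBA : ℚ)⌉ :=
  stmt_0_general A B C eBA eCB dBA dCB dCA he₂ htot₁ htot₂ hd₁ hd₂ hd₃
end

section
/- Let G be a finite abelian group. Then the sum over all positive integers m of μ(m)·χ(m), where χ(m) = 1 if G contains a subgroup isomorphic to (ℤ/mℤ) × (ℤ/mℤ) and χ(m) = 0 otherwise (only finitely many terms are nonzero), equals 1 if G is cyclic and equals 0 if G is not cyclic. -/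
/-!
Write `χ(m)` for "`(ℤ/m)²` embeds in `G`". The set of such `m` is finite, closed under divisors
(`ℤ/d` embeds in `ℤ/m` for `d ∣ m`) and under coprime products (Chinese remainder theorem),
hence under `lcm`; so it is the set of divisors of a single `d ≠ 0`, and the sum is
`∑_{m ∣ d} μ(m) = [d = 1]`. Moreover `d = 1` iff no `(ℤ/p)²` embeds for a prime `p`, i.e. iff every
`p`-torsion subgroup `G[p]` has at most `p` elements. Since `|G[mn]| ≤ |G[m]| |G[n]|`, this gives
`|G[n]| ≤ n` for all `n ≠ 0`, which characterises cyclic groups.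
-/

open Function AddSubgroup

theorem Nat.exists_forall_iff_dvd {P : ℕ → Prop} (hfin : {m | P m}.Finite) (h1 : P 1)
    (hdvd : ∀ {m k}, k ∣ m → P m → P k)
    (hmul : ∀ {m n}, m.Coprime n → P m → P n → P (m * n)) :
    ∃ d ≠ 0, ∀ m, P m ↔ m ∣ d := by
  have hne : ∀ {m}, P m → m ≠ 0 := by
    rintro m hm rfl
    exact hfin.not_infinite (Set.infinite_of_forall_exists_gt fun n =>
      ⟨n + 1, hdvd (dvd_zero _) hm, n.lt_succ_self⟩)
  -- `lcm a b` is the product of a divisor of `a` and a coprime divisor of `b`.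
  have hlcm : ∀ {a b}, P a → P b → P (a.lcm b) := fun {a b} ha hb => by
    rw [← factorizationLCMLeft_mul_factorizationLCMRight (hne ha) (hne hb)]
    exact hmul (coprime_factorizationLCMLeft_factorizationLCMRight a b)
      (hdvd (factorizationLCMLeft_dvd_left a b) ha) (hdvd (factorizationLCMRight_dvd_right a b) hb)
  have hfinset : ∀ s : Finset ℕ, (∀ m ∈ s, P m) → P (s.lcm id) := by
    intro s
    induction s using Finset.induction_on with
    | empty => simpa using h1
    | insert a s _ ih =>
      intro hs
      rw [Finset.lcm_insert, lcm_eq_nat_lcm]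
      exact hlcm (hs a (s.mem_insert_self a)) (ih fun m hm => hs m (Finset.mem_insert_of_mem hm))
  have hd : P (hfin.toFinset.lcm id) := hfinset _ fun m hm => hfin.mem_toFinset.1 hm
  exact ⟨_, hne hd, fun m =>
    ⟨fun hm => Finset.dvd_lcm (hfin.mem_toFinset.2 hm), fun hm => hdvd hm hd⟩⟩

open ArithmeticFunction in
open scoped ArithmeticFunction.Moebius ArithmeticFunction.zeta in
theorem finsum_moebius_mul_ite_dvd {d : ℕ} (hd : d ≠ 0) :
    ∑ᶠ m : ℕ, (μ m : ℤ) * (if m ∣ d then 1 else 0) = if d = 1 then 1 else 0 := by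
  have hsupp : support (fun m : ℕ => (μ m : ℤ) * (if m ∣ d then 1 else 0)) ⊆ d.divisors := by
    intro m hm
    by_contra h
    exact hm (by simp_all)
  calc ∑ᶠ m : ℕ, (μ m : ℤ) * (if m ∣ d then 1 else 0)
      = ∑ m ∈ d.divisors, (μ m : ℤ) := by
        rw [finsum_eq_sum_of_support_subset _ hsupp]
        refine Finset.sum_congr rfl fun m hm => ?_
        rw [if_pos (Nat.dvd_of_mem_divisors hm), mul_one]
    _ = (μ * ζ : ArithmeticFunction ℤ) d := (coe_mul_zeta_apply ..).symm
    _ = if d = 1 then 1 else 0 := by rw [moebius_mul_coe_zeta, one_apply]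

section AddCommGroup

variable {A : Type*} [AddCommGroup A]

theorem exists_injective_zmod_range_eq_zmultiples {m : ℕ} {a : A} (ha : addOrderOf a = m) :
    ∃ g : ZMod m →+ A, Injective g ∧ g.range = zmultiples a := by
  subst ha
  let g := ZMod.lift (addOrderOf a) ⟨zmultiplesHom A a, by simp [addOrderOf_nsmul_eq_zero]⟩
  refine ⟨g, (ZMod.lift_injective _).2 fun k hk => ?_, ?_⟩
  · rwa [ZMod.intCast_zmod_eq_zero_iff_dvd, addOrderOf_dvd_iff_zsmul_eq_zero]
  · ext x
    simp [g, ZMod.intCast_surjective.exists, mem_zmultiples_iff]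

theorem AddMonoidHom.injective_coprod_of_disjoint {B C : Type*} [AddCommGroup B] [AddCommGroup C]
    {f : B →+ A} {g : C →+ A} (hf : Injective f) (hg : Injective g)
    (hfg : Disjoint f.range g.range) : Injective (f.coprod g) := by
  rw [injective_iff_map_eq_zero]
  rintro ⟨b, c⟩ h
  have hgc : g c = - f b := eq_neg_of_add_eq_zero_right h
  have hfb : f b = 0 := disjoint_def.1 hfg ⟨b, rfl⟩ ⟨-c, by simp [hgc]⟩
  have hgc' : g c = 0 := by rw [hgc, hfb, neg_zero]
  simp [(injective_iff_map_eq_zero f).1 hf b hfb, (injective_iff_map_eq_zero g).1 hg c hgc']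

theorem disjoint_zmultiples_of_prime {x y : A} (hy : (addOrderOf y).Prime)
    (hyx : y ∉ zmultiples x) : Disjoint (zmultiples x) (zmultiples y) := by
  have hdvd : Nat.card ↥(zmultiples x ⊓ zmultiples y) ∣ addOrderOf y :=
    Nat.card_zmultiples y ▸ card_dvd_of_le inf_le_right
  rw [disjoint_iff]
  rcases hy.eq_one_or_self_of_dvd _ hdvd with h | h
  · exact card_eq_one.1 h
  · have : Finite (zmultiples y) :=
      Nat.finite_of_card_ne_zero (by rw [Nat.card_zmultiples]; exact hy.ne_zero)
    have heq : zmultiples x ⊓ zmultiples y = zmultiples y :=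
      eq_of_le_of_card_ge inf_le_right (by rw [h, Nat.card_zmultiples])
    exact absurd (heq.ge (mem_zmultiples y)).1 hyx

theorem card_torsionBy_mul_le [Finite A] (m n : ℕ) :
    Nat.card A[(m * n : ℕ)] ≤ Nat.card A[n] * Nat.card A[m] := by
  let φ : A[(m * n : ℕ)] →+ A[m] := AddMonoidHom.mk'
    (fun x => ⟨n • x.1, torsionBy.nsmul_iff.2 (by rw [smul_smul, ← torsionBy.nsmul_iff]; exact x.2)⟩)
    fun x y => by ext; simp
  have hker : Nat.card φ.ker ≤ Nat.card A[n] :=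
    Nat.card_le_card_of_injective
      (fun x => ⟨x.1.1, torsionBy.nsmul_iff.2 (congrArg Subtype.val x.2)⟩)
      fun x y h => by ext; simpa using h
  calc Nat.card A[(m * n : ℕ)] = Nat.card φ.ker * Nat.card φ.range := by
        rw [← index_ker, card_mul_index]
    _ ≤ Nat.card A[n] * Nat.card A[m] :=
        Nat.mul_le_mul hker (Nat.card_le_card_of_injective _ Subtype.val_injective)

theorem card_torsionBy_le_of_forall_prime [Finite A]
    (hA : ∀ p : ℕ, p.Prime → Nat.card A[p] ≤ p) {n : ℕ} (hn : n ≠ 0) : Nat.card A[n] ≤ n := by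
  induction n using Nat.recOnMul with
  | zero => exact absurd rfl hn
  | one => simp
  | prime p hp => exact hA p hp
  | mul a b ha hb =>
    rw [mul_ne_zero_iff] at hn
    calc Nat.card A[(a * b : ℕ)] ≤ Nat.card A[b] * Nat.card A[a] := card_torsionBy_mul_le a b
      _ ≤ b * a := Nat.mul_le_mul (hb hn.2) (ha hn.1)
      _ = a * b := mul_comm b a

theorem isAddCyclic_of_forall_card_torsionBy_le [Finite A]
    (hA : ∀ p : ℕ, p.Prime → Nat.card A[p] ≤ p) : IsAddCyclic A := by
  classical
  have := Fintype.ofFinite A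
  refine isAddCyclic_of_card_nsmul_eq_zero_le fun {n} hn => ?_
  calc Finset.card {a : A | n • a = 0} = Nat.card A[n] := by
        rw [Nat.card_eq_fintype_card, Fintype.card_subtype]; simp
    _ ≤ n := card_torsionBy_le_of_forall_prime hA hn.ne'

variable (A) in
def EmbedsZModSq (m : ℕ) : Prop :=
  ∃ f : ZMod m × ZMod m →+ A, Injective f

namespace EmbedsZModSq

variable {m n : ℕ}

theorem one : EmbedsZModSq A 1 := ⟨0, fun _ _ _ => Subsingleton.elim _ _⟩

theorem mul_self_le_card [Finite A] (h : EmbedsZModSq A m) : m * m ≤ Nat.card A := by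
  obtain ⟨f, hf⟩ := h
  simpa using Nat.card_le_card_of_injective f hf

theorem ne_zero [Finite A] (h : EmbedsZModSq A m) : m ≠ 0 := by
  rintro rfl
  obtain ⟨f, hf⟩ := h
  have := Finite.of_injective f hf
  exact not_finite (ZMod 0 × ZMod 0)

theorem of_dvd (h : EmbedsZModSq A m) (hm : m ≠ 0) {d : ℕ} (hd : d ∣ m) : EmbedsZModSq A d := by
  obtain ⟨f, hf⟩ := h
  have horder : addOrderOf ((m / d : ℕ) : ZMod m) = d := by
    rw [ZMod.addOrderOf_coe _ hm, Nat.gcd_eq_right (Nat.div_dvd_of_dvd hd),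
      Nat.div_div_self hd hm]
  obtain ⟨g, hg, -⟩ := exists_injective_zmod_range_eq_zmultiples horder
  exact ⟨f.comp (g.prodMap g), hf.comp (hg.prodMap hg)⟩

theorem mul (hmn : m.Coprime n) (hm : EmbedsZModSq A m) (hn : EmbedsZModSq A n) :
    EmbedsZModSq A (m * n) := by
  obtain ⟨f, hf⟩ := hm
  obtain ⟨g, hg⟩ := hn
  have hdisj : Disjoint f.range g.range := by
    refine disjoint_def.2 fun {a} ⟨x, hx⟩ ⟨y, hy⟩ => ?_
    have hkill : ∀ {k : ℕ} (z : ZMod k × ZMod k), k • z = 0 := fun z => by ext <;> simp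
    have hom : addOrderOf a ∣ m :=
      addOrderOf_dvd_of_nsmul_eq_zero <| by rw [← hx, ← map_nsmul, hkill, map_zero]
    have hon : addOrderOf a ∣ n :=
      addOrderOf_dvd_of_nsmul_eq_zero <| by rw [← hy, ← map_nsmul, hkill, map_zero]
    exact AddMonoid.addOrderOf_eq_one_iff.1 (Nat.eq_one_of_dvd_coprimes hmn hom hon)
  let crt := (ZMod.chineseRemainder hmn).toAddEquiv
  let e := (crt.prodCongr crt).trans (AddEquiv.prodProdProdComm _ _ _ _)
  exact ⟨(f.coprod g).comp e.toAddMonoidHom,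
    (AddMonoidHom.injective_coprod_of_disjoint hf hg hdisj).comp e.injective⟩

theorem eq_one [IsAddCyclic A] (h : EmbedsZModSq A m) : m = 1 := by
  obtain ⟨f, hf⟩ := h
  have := isAddCyclic_of_injective f hf
  simpa using (AddGroup.isAddCyclic_prod_iff.1 this).2.2

end EmbedsZModSq

theorem embedsZModSq_of_lt_card_torsionBy [Finite A] {p : ℕ} (hp : p.Prime)
    (h : p < Nat.card A[p]) : EmbedsZModSq A p := by
  have := Fact.mk hp
  have hord : ∀ z ∈ A[p], z ≠ 0 → addOrderOf z = p := fun z hz hz0 =>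
    addOrderOf_eq_prime (torsionBy.nsmul_iff.1 hz) hz0
  have : Nontrivial A[p] := Finite.one_lt_card_iff_nontrivial.1 (hp.one_lt.trans h)
  obtain ⟨⟨x, hx⟩, hx0⟩ := exists_ne (0 : A[p])
  have hxo : addOrderOf x = p := hord x hx (by simpa using hx0)
  obtain ⟨y, hy, hyx⟩ : ∃ y ∈ A[p], y ∉ zmultiples x := SetLike.not_le_iff_exists.1 fun hle =>
    (card_le_of_le hle).not_gt (by rwa [Nat.card_zmultiples, hxo])
  have hyo : addOrderOf y = p := hord y hy (by rintro rfl; exact hyx (zero_mem _))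
  obtain ⟨f, hf, hfr⟩ := exists_injective_zmod_range_eq_zmultiples hxo
  obtain ⟨g, hg, hgr⟩ := exists_injective_zmod_range_eq_zmultiples hyo
  refine ⟨f.coprod g, AddMonoidHom.injective_coprod_of_disjoint hf hg ?_⟩
  rw [hfr, hgr]
  exact disjoint_zmultiples_of_prime (hyo ▸ hp) hyx

theorem isAddCyclic_iff_forall_prime_not_embedsZModSq [Finite A] :
    IsAddCyclic A ↔ ∀ p : ℕ, p.Prime → ¬ EmbedsZModSq A p :=
  ⟨fun _ _ hp h => hp.one_lt.ne' h.eq_one, fun h =>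
    isAddCyclic_of_forall_card_torsionBy_le fun p hp =>
      not_lt.1 fun hlt => h p hp (embedsZModSq_of_lt_card_torsionBy hp hlt)⟩

theorem exists_forall_embedsZModSq_iff_dvd [Finite A] :
    ∃ d ≠ 0, ∀ m, EmbedsZModSq A m ↔ m ∣ d :=
  Nat.exists_forall_iff_dvd
    ((Set.finite_Iic (Nat.card A)).subset fun m hm => (Nat.le_mul_self m).trans hm.mul_self_le_card)
    EmbedsZModSq.one (fun hkm hm => hm.of_dvd hm.ne_zero hkm) (fun hmn hm hn => hm.mul hmn hn)

end AddCommGroup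

theorem exists_subgroup_mulEquiv_iff_exists_injective {G K : Type*} [Group G] [Group K] :
    (∃ H : Subgroup G, Nonempty (H ≃* K)) ↔ ∃ f : K →* G, Injective f :=
  ⟨fun ⟨H, ⟨e⟩⟩ => ⟨H.subtype.comp e.symm.toMonoidHom, H.subtype_injective.comp e.symm.injective⟩,
    fun ⟨f, hf⟩ => ⟨f.range, ⟨(MonoidHom.ofInjective hf).symm⟩⟩⟩

theorem exists_subgroup_mulEquiv_iff_embedsZModSq (G : Type*) [CommGroup G] (m : ℕ) :
    (∃ H : Subgroup G, Nonempty (H ≃* Multiplicative (ZMod m × ZMod m))) ↔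
      EmbedsZModSq (Additive G) m := by
  rw [exists_subgroup_mulEquiv_iff_exists_injective]
  exact ⟨fun ⟨f, hf⟩ => ⟨AddMonoidHom.toMultiplicativeLeft.symm f, hf⟩,
    fun ⟨f, hf⟩ => ⟨AddMonoidHom.toMultiplicativeLeft f, hf⟩⟩

open scoped Classical in
/-- For a finite abelian group `G`, the sum over all positive integers `m` of
`μ(m)·χ(m)`, where `χ(m) = 1` iff `G` contains a subgroup isomorphic to `(ℤ/mℤ)²`, equals `1`
if `G` is cyclic and `0` otherwise. (Only finitely many terms are nonzero; `μ(0) = 0`.) -/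
theorem stmt_3 (G : Type*) [CommGroup G] [Finite G] :
    (∑ᶠ m : ℕ, ((ArithmeticFunction.moebius m : ℤ) *
        (if ∃ H : Subgroup G, Nonempty (H ≃* Multiplicative (ZMod m × ZMod m)) then 1 else 0))) =
      if IsCyclic G then 1 else 0 := by
  obtain ⟨d, hd0, hd⟩ := exists_forall_embedsZModSq_iff_dvd (A := Additive G)
  have hcyc : IsCyclic G ↔ d = 1 := by
    rw [← isAddCyclic_additive_iff, isAddCyclic_iff_forall_prime_not_embedsZModSq,
      Nat.eq_one_iff_not_exists_prime_dvd]
    simp only [hd]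
  simp only [exists_subgroup_mulEquiv_iff_embedsZModSq, hd, hcyc]
  convert finsum_moebius_mul_ite_dvd hd0
end

section
/- Let q₁, q₂, q₃ be pairwise coprime integers, each greater than 2, and set N = q₁q₂q₃. For i = 1, 2, 3 let x_i ∈ ℤ/Nℤ be the element (given by the Chinese remainder theorem) with x_i ≡ 1 (mod q_i) and x_i ≡ −1 (mod q_j) for j ≠ i. Then the set H = {diag(1,1), diag(x₁,x₁), diag(x₂,x₂), diag(x₃,x₃)} of scalar matrices is a subgroup of SL₂(ℤ/Nℤ) isomorphic to (ℤ/2ℤ)², and for every h ∈ H there exists a prime ℓ dividing N with π_ℓ(h) = 1, i.e. H = ⋃_{ℓ prime, ℓ | N} H_ℓ. -/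
/-!
By the Chinese remainder theorem an element of `ℤ/Nℤ` is determined by its residues modulo
`q₁, q₂, q₃`; comparing residues gives `x₁² = x₂² = 1` and `x₁ x₂ = x₃`. Hence `x₁ • 1` and
`x₂ • 1` are commuting involutions of `SL₂(ℤ/Nℤ)`, distinct from each other and from `1` because
`-1 ≠ 1` modulo `qᵢ > 2`, and `{1, x₁ • 1, x₂ • 1, x₃ • 1}` is the Klein four-group they generate.
Each `xᵢ` is `1` modulo `qᵢ`, hence modulo every prime factor of `qᵢ`.
-/

namespace ZMod

theorem castHom_eq_castHom_iff_dvd_sub {q N : ℕ} (hd : q ∣ N) (a b : ZMod N) :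
    castHom hd (ZMod q) a = castHom hd (ZMod q) b ↔ (q : ℤ) ∣ (cast b : ℤ) - cast a := by
  have lift_to_int : ∀ x : ZMod N, castHom hd (ZMod q) x = ((cast x : ℤ) : ZMod q) := fun x => by
    rw [castHom_apply, ← cast_intCast hd, intCast_zmod_cast]
  rw [lift_to_int, lift_to_int, intCast_eq_intCast_iff_dvd_sub]

theorem eq_of_castHom_eq {q₁ q₂ q₃ N : ℕ} (h₁₂ : q₁.Coprime q₂) (h₁₃ : q₁.Coprime q₃)
    (h₂₃ : q₂.Coprime q₃) (hN : N ∣ q₁ * q₂ * q₃)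
    (hd₁ : q₁ ∣ N) (hd₂ : q₂ ∣ N) (hd₃ : q₃ ∣ N) {a b : ZMod N}
    (e₁ : castHom hd₁ (ZMod q₁) a = castHom hd₁ (ZMod q₁) b)
    (e₂ : castHom hd₂ (ZMod q₂) a = castHom hd₂ (ZMod q₂) b)
    (e₃ : castHom hd₃ (ZMod q₃) a = castHom hd₃ (ZMod q₃) b) : a = b := by
  rw [castHom_eq_castHom_iff_dvd_sub] at e₁ e₂ e₃
  have hprod : ((q₁ * q₂ * q₃ : ℕ) : ℤ) ∣ (cast b : ℤ) - cast a := by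
    push_cast
    refine IsCoprime.mul_dvd ?_ (IsCoprime.mul_dvd (Nat.isCoprime_iff_coprime.2 h₁₂) e₁ e₂) e₃
    exact (Nat.isCoprime_iff_coprime.2 h₁₃).mul_left (Nat.isCoprime_iff_coprime.2 h₂₃)
  simpa [castHom_self] using
    (castHom_eq_castHom_iff_dvd_sub dvd_rfl a b).2 ((Int.natCast_dvd_natCast.2 hN).trans hprod)

theorem ne_of_castHom_eq_one_of_castHom_eq_neg_one {q N : ℕ} (hq : 2 < q) (hd : q ∣ N)
    {x y : ZMod N} (hx : castHom hd (ZMod q) x = 1) (hy : castHom hd (ZMod q) y = -1) : x ≠ y :=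
  have : Fact (2 < q) := ⟨hq⟩
  fun h => neg_one_ne_one (n := q) (by rw [← hy, ← h, hx])

theorem exists_prime_castHom_eq_one {q N : ℕ} (hq : q ≠ 1) (hd : q ∣ N) {x : ZMod N}
    (hx : castHom hd (ZMod q) x = 1) :
    ∃ ℓ : ℕ, ℓ.Prime ∧ ∃ hℓ : ℓ ∣ N, castHom hℓ (ZMod ℓ) x = 1 := by
  obtain ⟨ℓ, hℓ, hℓq⟩ := Nat.exists_prime_and_dvd hq
  refine ⟨ℓ, hℓ, hℓq.trans hd, ?_⟩
  rw [← castHom_comp hℓq hd, RingHom.comp_apply, hx, map_one]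

end ZMod

section CommutingInvolutions

variable {G : Type*} [Group G] {a b : G}

def Subgroup.ofCommutingInvolutions (ha : a * a = 1) (hb : b * b = 1) (hab : Commute a b) :
    Subgroup G where
  carrier := {1, a, b, a * b}
  one_mem' := by simp
  mul_mem' := by
    have hba : b * a = a * b := hab.eq.symm
    simp only [Set.mem_insert_iff, Set.mem_singleton_iff]
    rintro x y (hx | hx | hx | hx) (hy | hy | hy | hy) <;> subst x y <;>
      simp [← mul_assoc, ha, hb, hba, mul_assoc a]
  inv_mem' := by
    simp only [Set.mem_insert_iff, Set.mem_singleton_iff]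
    rintro x (hx | hx | hx | hx) <;> subst x <;>
      simp [inv_eq_of_mul_eq_one_right ha, inv_eq_of_mul_eq_one_right hb, hab.eq]

theorem Subgroup.mem_ofCommutingInvolutions {ha : a * a = 1} {hb : b * b = 1}
    {hab : Commute a b} {g : G} :
    g ∈ Subgroup.ofCommutingInvolutions ha hb hab ↔ g = 1 ∨ g = a ∨ g = b ∨ g = a * b :=
  Iff.rfl

theorem Subgroup.isKleinFour_ofCommutingInvolutions (ha : a * a = 1) (hb : b * b = 1)
    (hab : Commute a b) (ha₁ : a ≠ 1) (hb₁ : b ≠ 1) (hab₁ : a ≠ b) :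
    IsKleinFour (Subgroup.ofCommutingInvolutions ha hb hab) where
  card_four := by
    have hb' : b⁻¹ = b := inv_eq_of_mul_eq_one_right hb
    rw [← SetLike.coe_sort_coe, Nat.card_coe_set_eq]
    show Set.ncard {1, a, b, a * b} = 4
    rw [Set.ncard_insert_of_notMem, Set.ncard_insert_of_notMem, Set.ncard_pair]
    · exact fun h => ha₁ (right_eq_mul.1 h)
    · simp only [Set.mem_insert_iff, Set.mem_singleton_iff, not_or]
      exact ⟨hab₁, fun h => hb₁ (left_eq_mul.1 h)⟩
    · simp only [Set.mem_insert_iff, Set.mem_singleton_iff, not_or]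
      exact ⟨ha₁.symm, hb₁.symm, fun h => hab₁ ((mul_eq_one_iff_eq_inv.1 h.symm).trans hb')⟩
  exponent_two := by
    have hsq : ∀ g : Subgroup.ofCommutingInvolutions ha hb hab, g ^ 2 = 1 := by
      rintro ⟨g, hg | hg | hg | hg⟩ <;> subst g <;> ext <;>
        simp [sq, ha, hb, mul_assoc, ← mul_assoc b, hab.eq.symm]
    have hnontriv : Monoid.exponent (Subgroup.ofCommutingInvolutions ha hb hab) ≠ 1 := by
      rw [Ne, Monoid.exp_eq_one_iff, not_subsingleton_iff_nontrivial,
        Subgroup.nontrivial_iff_ne_bot, Subgroup.ne_bot_iff_exists_ne_one]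
      exact ⟨⟨a, Or.inr (Or.inl rfl)⟩, fun h => ha₁ (congrArg Subtype.val h)⟩
    exact ((Nat.dvd_prime Nat.prime_two).1
      (Monoid.exponent_dvd_of_forall_pow_eq_one hsq)).resolve_left hnontriv

end CommutingInvolutions

namespace Matrix.SpecialLinearGroup

variable {n : Type*} [Fintype n] [DecidableEq n] {R S : Type*} [CommRing R] [CommRing S]

def scalar (x : R) (hx : x ^ Fintype.card n = 1) : SpecialLinearGroup n R :=
  ⟨x • 1, by rw [det_smul, det_one, mul_one, hx]⟩

@[simp]
theorem coe_scalar (x : R) (hx : x ^ Fintype.card n = 1) :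
    (scalar x hx : Matrix n n R) = x • 1 :=
  rfl

theorem scalar_mul_scalar {x y : R} (hx : x ^ Fintype.card n = 1) (hy : y ^ Fintype.card n = 1) :
    scalar x hx * scalar y hy = scalar (x * y) (by rw [mul_pow, hx, hy, one_mul]) :=
  Subtype.ext <| by rw [coe_mul, coe_scalar, coe_scalar, coe_scalar, smul_mul_smul_comm, one_mul]

theorem scalar_inj [Nonempty n] {x y : R} (hx : x ^ Fintype.card n = 1)
    (hy : y ^ Fintype.card n = 1) : scalar x hx = scalar y hy ↔ x = y := by
  refine ⟨fun h => ?_, fun h => by subst h; rfl⟩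
  obtain ⟨i⟩ := ‹Nonempty n›
  simpa using congrArg (fun g : SpecialLinearGroup n R => g i i) h

theorem scalar_one : scalar (1 : R) (one_pow _) = (1 : SpecialLinearGroup n R) :=
  Subtype.ext <| by simp

theorem scalar_eq_one_iff [Nonempty n] {x : R} (hx : x ^ Fintype.card n = 1) :
    scalar x hx = 1 ↔ x = 1 := by
  rw [← scalar_one, scalar_inj]

theorem commute_scalar {x y : R} (hx : x ^ Fintype.card n = 1) (hy : y ^ Fintype.card n = 1) :
    Commute (scalar x hx) (scalar y hy) := by
  rw [Commute, SemiconjBy, scalar_mul_scalar, scalar_mul_scalar]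
  congr 1
  exact mul_comm x y

theorem coe_inj {g h : SpecialLinearGroup n R} : (g : Matrix n n R) = h ↔ g = h :=
  Subtype.ext_iff.symm

theorem exists_isKleinFour_smul_one {x y : R} (hx : x ^ 2 = 1) (hy : y ^ 2 = 1) (hx₁ : x ≠ 1)
    (hy₁ : y ≠ 1) (hxy : x ≠ y) :
    ∃ H : Subgroup (SpecialLinearGroup (Fin 2) R),
      (∀ g : SpecialLinearGroup (Fin 2) R, g ∈ H ↔ (g : Matrix (Fin 2) (Fin 2) R) ∈
        ({1, x • 1, y • 1, (x * y) • 1} : Set (Matrix (Fin 2) (Fin 2) R))) ∧ IsKleinFour H := by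
  rw [← Fintype.card_fin 2] at hx hy
  have scalar_mul_self {z : R} (hz : z ^ Fintype.card (Fin 2) = 1) :
      scalar z hz * scalar z hz = 1 := by
    rw [scalar_mul_scalar, scalar_eq_one_iff, ← sq, ← Fintype.card_fin 2, hz]
  refine ⟨Subgroup.ofCommutingInvolutions (scalar_mul_self hx) (scalar_mul_self hy)
    (commute_scalar hx hy), fun g => ?_, Subgroup.isKleinFour_ofCommutingInvolutions _ _ _
    (by rwa [Ne, scalar_eq_one_iff]) (by rwa [Ne, scalar_eq_one_iff]) (by rwa [Ne, scalar_inj])⟩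
  rw [Subgroup.mem_ofCommutingInvolutions, scalar_mul_scalar]
  simp only [Set.mem_insert_iff, Set.mem_singleton_iff, ← coe_inj, coe_one, coe_scalar]

theorem exists_prime_map_eq_one_of_coe_eq_smul_one {q N : ℕ} (hq : q ≠ 1) (hd : q ∣ N)
    {g : SpecialLinearGroup n (ZMod N)} {x : ZMod N} (hg : (g : Matrix n n (ZMod N)) = x • 1)
    (hxq : ZMod.castHom hd (ZMod q) x = 1) :
    ∃ (ℓ : ℕ) (_ : ℓ.Prime) (hℓ : ℓ ∣ N), map (ZMod.castHom hℓ (ZMod ℓ)) g = 1 := by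
  obtain ⟨ℓ, hℓ, hℓN, hxℓ⟩ := ZMod.exists_prime_castHom_eq_one hq hd hxq
  refine ⟨ℓ, hℓ, hℓN, Subtype.ext ?_⟩
  ext i j
  simp [hg, Matrix.one_apply, apply_ite (ZMod.castHom hℓN (ZMod ℓ)), hxℓ]

end Matrix.SpecialLinearGroup

open Matrix in
/-- Let `q₁, q₂, q₃ > 2` be pairwise coprime, `N = q₁q₂q₃`, and let
`x₁, x₂, x₃ ∈ ℤ/Nℤ` satisfy `xᵢ ≡ 1 (mod qᵢ)` and `xᵢ ≡ -1 (mod qⱼ)` for `j ≠ i`. Then the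
scalar matrices `{1, x₁•1, x₂•1, x₃•1}` form a subgroup `H` of `SL₂(ℤ/Nℤ)` isomorphic to
`(ℤ/2ℤ)²`, and every element of `H` reduces to the identity modulo some prime `ℓ ∣ N`. -/
theorem stmt_5 (q₁ q₂ q₃ : ℕ) (h₁ : 2 < q₁) (h₂ : 2 < q₂) (h₃ : 2 < q₃)
    (h₁₂ : Nat.Coprime q₁ q₂) (h₁₃ : Nat.Coprime q₁ q₃) (h₂₃ : Nat.Coprime q₂ q₃)
    (N : ℕ) (hN : N = q₁ * q₂ * q₃)
    (hd₁ : q₁ ∣ N) (hd₂ : q₂ ∣ N) (hd₃ : q₃ ∣ N)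
    (x₁ x₂ x₃ : ZMod N)
    (hx₁₁ : ZMod.castHom hd₁ (ZMod q₁) x₁ = 1)
    (hx₁₂ : ZMod.castHom hd₂ (ZMod q₂) x₁ = -1)
    (hx₁₃ : ZMod.castHom hd₃ (ZMod q₃) x₁ = -1)
    (hx₂₁ : ZMod.castHom hd₁ (ZMod q₁) x₂ = -1)
    (hx₂₂ : ZMod.castHom hd₂ (ZMod q₂) x₂ = 1)
    (hx₂₃ : ZMod.castHom hd₃ (ZMod q₃) x₂ = -1)
    (hx₃₁ : ZMod.castHom hd₁ (ZMod q₁) x₃ = -1)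
    (hx₃₂ : ZMod.castHom hd₂ (ZMod q₂) x₃ = -1)
    (hx₃₃ : ZMod.castHom hd₃ (ZMod q₃) x₃ = 1) :
    ∃ H : Subgroup (SpecialLinearGroup (Fin 2) (ZMod N)),
      (∀ g : SpecialLinearGroup (Fin 2) (ZMod N),
        g ∈ H ↔ (g : Matrix (Fin 2) (Fin 2) (ZMod N)) ∈
          ({1, x₁ • 1, x₂ • 1, x₃ • 1} : Set (Matrix (Fin 2) (Fin 2) (ZMod N)))) ∧
      Nonempty (H ≃* Multiplicative (ZMod 2 × ZMod 2)) ∧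
      ∀ g ∈ H, ∃ (ℓ : ℕ) (_ : ℓ.Prime) (hd : ℓ ∣ N),
        SpecialLinearGroup.map (ZMod.castHom hd (ZMod ℓ)) g = 1 := by
  have crt {a b : ZMod N} :=
    ZMod.eq_of_castHom_eq h₁₂ h₁₃ h₂₃ (dvd_of_eq hN) hd₁ hd₂ hd₃ (a := a) (b := b)
  have hsq₁ : x₁ ^ 2 = 1 := crt (by simp [-ZMod.castHom_apply, hx₁₁])
    (by simp [-ZMod.castHom_apply, hx₁₂]) (by simp [-ZMod.castHom_apply, hx₁₃])
  have hsq₂ : x₂ ^ 2 = 1 := crt (by simp [-ZMod.castHom_apply, hx₂₁])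
    (by simp [-ZMod.castHom_apply, hx₂₂]) (by simp [-ZMod.castHom_apply, hx₂₃])
  have hx₁x₂ : x₁ * x₂ = x₃ := crt (by simp [-ZMod.castHom_apply, hx₁₁, hx₂₁, hx₃₁])
    (by simp [-ZMod.castHom_apply, hx₁₂, hx₂₂, hx₃₂])
    (by simp [-ZMod.castHom_apply, hx₁₃, hx₂₃, hx₃₃])
  obtain ⟨H, hmem, hH⟩ := SpecialLinearGroup.exists_isKleinFour_smul_one hsq₁ hsq₂
    (ZMod.ne_of_castHom_eq_one_of_castHom_eq_neg_one h₂ hd₂ (map_one _) hx₁₂).symm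
    (ZMod.ne_of_castHom_eq_one_of_castHom_eq_neg_one h₁ hd₁ (map_one _) hx₂₁).symm
    (ZMod.ne_of_castHom_eq_one_of_castHom_eq_neg_one h₁ hd₁ hx₁₁ hx₂₁)
  rw [hx₁x₂] at hmem
  refine ⟨H, hmem, IsKleinFour.nonempty_mulEquiv, fun g hg => ?_⟩
  obtain hg | hg | hg | hg := (hmem g).1 hg
  · exact SpecialLinearGroup.exists_prime_map_eq_one_of_coe_eq_smul_one (by omega) hd₁
      (hg.trans (one_smul _ _).symm) (map_one _)
  · exact SpecialLinearGroup.exists_prime_map_eq_one_of_coe_eq_smul_one (by omega) hd₁ hg hx₁₁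
  · exact SpecialLinearGroup.exists_prime_map_eq_one_of_coe_eq_smul_one (by omega) hd₂ hg hx₂₂
  · exact SpecialLinearGroup.exists_prime_map_eq_one_of_coe_eq_smul_one (by omega) hd₃ hg hx₃₃
end

section
/- Let α ≥ 1 be an integer and q₁, q₂ coprime odd integers, each greater than 1, and set N = 2^α q₁ q₂. Let r ∈ ℤ/Nℤ satisfy r ≡ 1 (mod 2^α), r ≡ 1 (mod q₁), r ≡ −1 (mod q₂), and let b = 2^{α−1} q₁ q₂ ∈ ℤ/Nℤ. Then the set H = { [[1,0],[0,1]], [[−1,0],[0,−1]], [[r,b],[0,r]], [[−r,b],[0,−r]] } is a subgroup of SL₂(ℤ/Nℤ) isomorphic to (ℤ/2ℤ)², and for every h ∈ H there exists a prime ℓ dividing N with π_ℓ(h) = 1, i.e. H = ⋃_{ℓ prime, ℓ | N} H_ℓ. -/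
/-! Over any commutative ring, if `r * r = 1` and `b + b = 0` then `u = [[r, b], [0, r]]` is
an involution of `SL₂` commuting with `-1`, so `{1, -1, u, -u}` is a subgroup, and a Klein
four-group as soon as `-1 ≠ 1` and `b ≠ 0`. For the given `r` and `b` these hold because
`r² ≡ 1` modulo each of the coprime factors `2^α`, `q₁`, `q₂` of `N`, and because `b` is
exactly `N / 2`. Since `b ≡ 0` modulo every odd prime `ℓ ∣ N`, reduction modulo `ℓ ∣ q₁` kills
`u` (there `r ≡ 1`), reduction modulo `ℓ ∣ q₂` kills `-u = [[-r, b], [0, -r]]` (there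
`r ≡ -1`), and reduction modulo `2` kills `-1`. -/

namespace Subgroup

variable {G : Type*} [Group G] {a b : G}

def ofCommuteInvolutions (ha : a * a = 1) (hb : b * b = 1) (hab : Commute a b) : Subgroup G where
  carrier := {1, a, b, a * b}
  one_mem' := Or.inl rfl
  mul_mem' := by
    have ha' (x : G) : a * (a * x) = x := by rw [← mul_assoc, ha, one_mul]
    have hba (x : G) : b * (a * x) = a * (b * x) := hab.symm.left_comm x
    rintro x y (hx | hx | hx | hx) (hy | hy | hy | hy) <;> subst x y <;>
      simp [mul_assoc, ha, hb, ha', hba, hab.symm.eq]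
  inv_mem' := by
    rintro x (hx | hx | hx | hx) <;> subst x
    · simp
    · simp [inv_eq_of_mul_eq_one_left ha]
    · simp [inv_eq_of_mul_eq_one_left hb]
    · simp [inv_eq_of_mul_eq_one_left ha, inv_eq_of_mul_eq_one_left hb, hab.eq]

variable {ha : a * a = 1} {hb : b * b = 1} {hab : Commute a b}

theorem mem_ofCommuteInvolutions {g : G} :
    g ∈ ofCommuteInvolutions ha hb hab ↔ g = 1 ∨ g = a ∨ g = b ∨ g = a * b := Iff.rfl

theorem mul_self_eq_one_of_mem_ofCommuteInvolutions {g : G}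
    (hg : g ∈ ofCommuteInvolutions ha hb hab) : g * g = 1 := by
  rcases hg with hg | hg | hg | hg <;> subst g
  · exact one_mul 1
  · exact ha
  · exact hb
  · rw [mul_assoc, ← mul_assoc b, ← hab.eq, mul_assoc, hb, mul_one, ha]

theorem isKleinFour_ofCommuteInvolutions (ha₁ : a ≠ 1) (hb₁ : b ≠ 1) (hne : a ≠ b) :
    IsKleinFour (ofCommuteInvolutions ha hb hab) where
  card_four := by
    rw [← SetLike.coe_sort_coe, Nat.card_coe_set_eq, Set.ncard_eq_four]
    refine ⟨1, a, b, a * b, Ne.symm ha₁, Ne.symm hb₁, fun h ↦ hne ?_, hne, ?_, ?_, rfl⟩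
    · rw [eq_inv_of_mul_eq_one_left h.symm, inv_eq_of_mul_eq_one_left hb]
    · rwa [Ne, left_eq_mul]
    · rwa [Ne, right_eq_mul]
  exponent_two := by
    have hdvd : Monoid.exponent (ofCommuteInvolutions ha hb hab) ∣ 2 :=
      Monoid.exponent_dvd_of_forall_pow_eq_one fun g ↦ Subtype.ext <| by
        simpa [sq] using mul_self_eq_one_of_mem_ofCommuteInvolutions g.2
    refine (Nat.prime_two.eq_one_or_self_of_dvd _ hdvd).resolve_left fun h ↦ ha₁ ?_
    have := Monoid.exp_eq_one_iff.mp h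
    let a' : ofCommuteInvolutions ha hb hab := ⟨a, Or.inr (Or.inl rfl)⟩
    exact congrArg Subtype.val (Subsingleton.elim a' 1)

end Subgroup

namespace ZMod

theorem castHom_eq_zero_iff_dvd_val {N m : ℕ} [NeZero N] (hd : m ∣ N) (x : ZMod N) :
    castHom hd (ZMod m) x = 0 ↔ m ∣ x.val := by
  rw [castHom_apply, ← natCast_val, natCast_eq_zero_iff]

theorem eq_zero_of_castHom_eq_zero {N a b c : ℕ} [NeZero N] (hN : N = a * b * c)
    (hab : a.Coprime b) (hac : a.Coprime c) (hbc : b.Coprime c)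
    (ha : a ∣ N) (hb : b ∣ N) (hc : c ∣ N) {x : ZMod N}
    (hxa : castHom ha (ZMod a) x = 0) (hxb : castHom hb (ZMod b) x = 0)
    (hxc : castHom hc (ZMod c) x = 0) : x = 0 := by
  rw [castHom_eq_zero_iff_dvd_val] at hxa hxb hxc
  have hNx : a * b * c ∣ x.val :=
    (hac.mul_left hbc).mul_dvd_of_dvd_of_dvd (hab.mul_dvd_of_dvd_of_dvd hxa hxb) hxc
  simpa [← hN] using (castHom_eq_zero_iff_dvd_val dvd_rfl x).mpr (hN ▸ hNx)

theorem natCast_add_self_eq_zero {n N : ℕ} (h : n + n = N) : (n : ZMod N) + n = 0 := by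
  rw [← Nat.cast_add, h, natCast_self]

theorem natCast_ne_zero_of_add_self_eq {n N : ℕ} (h : n + n = N) (hn : n ≠ 0) :
    (n : ZMod N) ≠ 0 := by
  rw [Ne, natCast_eq_zero_iff]
  exact Nat.not_dvd_of_pos_of_lt (by omega) (by omega)

end ZMod

namespace Matrix.SpecialLinearGroup

theorem coe_inj_s6 {n R : Type*} [Fintype n] [DecidableEq n] [CommRing R]
    {A B : SpecialLinearGroup n R} : (A : Matrix n n R) = B ↔ A = B :=
  Subtype.val_injective.eq_iff

theorem exists_prime_map_castHom_eq_one {n : Type*} [Fintype n] [DecidableEq n] {N q : ℕ}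
    (hq : q ≠ 1) (hd : q ∣ N) {g : SpecialLinearGroup n (ZMod N)}
    (hg : map (ZMod.castHom hd (ZMod q)) g = 1) :
    ∃ (ℓ : ℕ) (_ : ℓ.Prime) (hℓ : ℓ ∣ N), map (ZMod.castHom hℓ (ZMod ℓ)) g = 1 := by
  obtain ⟨ℓ, hℓ, hℓq⟩ := Nat.exists_prime_and_dvd hq
  refine ⟨ℓ, hℓ, hℓq.trans hd, ?_⟩
  rw [← ZMod.castHom_comp hℓq hd]
  exact (congrArg (map (ZMod.castHom hℓq (ZMod ℓ))) hg).trans (map_one _)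

variable {R S : Type*} [CommRing R] [CommRing S] {r b : R}

theorem coe_one_fin_two :
    ((1 : SpecialLinearGroup (Fin 2) R) : Matrix (Fin 2) (Fin 2) R) = !![1, 0; 0, 1] :=
  one_fin_two

theorem coe_neg_one_fin_two :
    ((-1 : SpecialLinearGroup (Fin 2) R) : Matrix (Fin 2) (Fin 2) R) = !![-1, 0; 0, -1] := by
  ext i j
  fin_cases i <;> fin_cases j <;> simp

theorem neg_one_ne_one (h : (-1 : R) ≠ 1) : (-1 : SpecialLinearGroup (Fin 2) R) ≠ 1 :=
  fun h' ↦ h (by simpa using congrArg (fun g : SpecialLinearGroup (Fin 2) R ↦ g 0 0) h')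

theorem map_neg_one_eq_one [CharP S 2] (f : R →+* S) :
    map f (-1 : SpecialLinearGroup (Fin 2) R) = 1 := by
  ext i j
  fin_cases i <;> fin_cases j <;> simp [CharTwo.neg_eq]

def upperScalar (r b : R) (hr : r * r = 1) : SpecialLinearGroup (Fin 2) R :=
  ⟨!![r, b; 0, r], by simp [det_fin_two_of, hr]⟩

theorem coe_upperScalar (hr : r * r = 1) :
    (upperScalar r b hr : Matrix (Fin 2) (Fin 2) R) = !![r, b; 0, r] := rfl

theorem upperScalar_mul_self (hr : r * r = 1) (hb : b + b = 0) :
    upperScalar r b hr * upperScalar r b hr = 1 := by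
  ext i j
  fin_cases i <;> fin_cases j <;> simp [coe_upperScalar, hr]
  linear_combination r * hb

theorem neg_upperScalar (hr : r * r = 1) (hb : b + b = 0) :
    -upperScalar r b hr = upperScalar (-r) b ((neg_mul_neg r r).trans hr) := by
  ext i j
  fin_cases i <;> fin_cases j <;> simp [coe_upperScalar]
  exact neg_eq_of_add_eq_zero_right hb

theorem map_upperScalar_eq_one (f : R →+* S) (hr : r * r = 1) (hr₁ : f r = 1) (hb₀ : f b = 0) :
    map f (upperScalar r b hr) = 1 := by
  ext i j
  fin_cases i <;> fin_cases j <;> simp [coe_upperScalar, hr₁, hb₀]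

theorem upperScalar_ne_one (hr : r * r = 1) (hb : b ≠ 0) : upperScalar r b hr ≠ 1 :=
  fun h ↦ hb <| by
    simpa [coe_upperScalar] using congrArg (fun g : SpecialLinearGroup (Fin 2) R ↦ g 0 1) h

theorem upperScalar_ne_neg_one (hr : r * r = 1) (hb : b ≠ 0) : upperScalar r b hr ≠ -1 :=
  fun h ↦ hb <| by
    simpa [coe_upperScalar] using congrArg (fun g : SpecialLinearGroup (Fin 2) R ↦ g 0 1) h

def upperScalarKleinFour (hr : r * r = 1) (hb : b + b = 0) :
    Subgroup (SpecialLinearGroup (Fin 2) R) :=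
  Subgroup.ofCommuteInvolutions (by simp) (upperScalar_mul_self hr hb) (Commute.neg_one_left _)

theorem mem_upperScalarKleinFour {hr : r * r = 1} {hb : b + b = 0}
    {g : SpecialLinearGroup (Fin 2) R} :
    g ∈ upperScalarKleinFour hr hb ↔ g = 1 ∨ g = -1 ∨ g = upperScalar r b hr ∨
      g = upperScalar (-r) b ((neg_mul_neg r r).trans hr) := by
  rw [upperScalarKleinFour, Subgroup.mem_ofCommuteInvolutions, neg_one_mul, neg_upperScalar hr hb]

theorem mem_upperScalarKleinFour_iff_coe_mem {hr : r * r = 1} {hb : b + b = 0}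
    {g : SpecialLinearGroup (Fin 2) R} :
    g ∈ upperScalarKleinFour hr hb ↔ (g : Matrix (Fin 2) (Fin 2) R) ∈
      ({!![1, 0; 0, 1], !![-1, 0; 0, -1], !![r, b; 0, r], !![-r, b; 0, -r]} :
        Set (Matrix (Fin 2) (Fin 2) R)) := by
  rw [mem_upperScalarKleinFour, ← coe_one_fin_two, ← coe_neg_one_fin_two, ← coe_upperScalar hr,
    ← coe_upperScalar ((neg_mul_neg r r).trans hr)]
  simp only [Set.mem_insert_iff, Set.mem_singleton_iff, coe_inj_s6]

theorem isKleinFour_upperScalarKleinFour (hr : r * r = 1) (hb : b + b = 0) (h : (-1 : R) ≠ 1)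
    (hb₀ : b ≠ 0) : IsKleinFour (upperScalarKleinFour hr hb) :=
  Subgroup.isKleinFour_ofCommuteInvolutions (neg_one_ne_one h) (upperScalar_ne_one hr hb₀)
    (upperScalar_ne_neg_one hr hb₀).symm

end Matrix.SpecialLinearGroup

open Matrix in
/-- Let `α ≥ 1`, let `q₁, q₂ > 1` be coprime odd integers, and
`N = 2^α q₁ q₂`. Let `r ∈ ℤ/Nℤ` satisfy `r ≡ 1 (mod 2^α)`, `r ≡ 1 (mod q₁)`,
`r ≡ -1 (mod q₂)`, and let `b = 2^(α-1) q₁ q₂ ∈ ℤ/Nℤ`. Then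
`H = {[[1,0],[0,1]], [[-1,0],[0,-1]], [[r,b],[0,r]], [[-r,b],[0,-r]]}` is a subgroup of
`SL₂(ℤ/Nℤ)` isomorphic to `(ℤ/2ℤ)²`, and every element of `H` reduces to the identity modulo
some prime `ℓ ∣ N`. -/
theorem stmt_6 (α q₁ q₂ : ℕ) (hα : 1 ≤ α) (hq₁ : 1 < q₁) (hq₂ : 1 < q₂)
    (hodd₁ : Odd q₁) (hodd₂ : Odd q₂) (hcop : Nat.Coprime q₁ q₂)
    (N : ℕ) (hN : N = 2 ^ α * q₁ * q₂)
    (hd₀ : 2 ^ α ∣ N) (hd₁ : q₁ ∣ N) (hd₂ : q₂ ∣ N)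
    (r b : ZMod N)
    (hr₀ : ZMod.castHom hd₀ (ZMod (2 ^ α)) r = 1)
    (hr₁ : ZMod.castHom hd₁ (ZMod q₁) r = 1)
    (hr₂ : ZMod.castHom hd₂ (ZMod q₂) r = -1)
    (hb : b = ((2 ^ (α - 1) * q₁ * q₂ : ℕ) : ZMod N)) :
    ∃ H : Subgroup (SpecialLinearGroup (Fin 2) (ZMod N)),
      (∀ g : SpecialLinearGroup (Fin 2) (ZMod N),
        g ∈ H ↔ (g : Matrix (Fin 2) (Fin 2) (ZMod N)) ∈
          ({!![1, 0; 0, 1], !![-1, 0; 0, -1], !![r, b; 0, r], !![-r, b; 0, -r]} :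
            Set (Matrix (Fin 2) (Fin 2) (ZMod N)))) ∧
      Nonempty (H ≃* Multiplicative (ZMod 2 × ZMod 2)) ∧
      ∀ g ∈ H, ∃ (ℓ : ℕ) (_ : ℓ.Prime) (hd : ℓ ∣ N),
        SpecialLinearGroup.map (ZMod.castHom hd (ZMod ℓ)) g = 1 := by
  have hhalf : 2 ^ (α - 1) * q₁ * q₂ + 2 ^ (α - 1) * q₁ * q₂ = N := by
    obtain ⟨k, rfl⟩ := Nat.exists_eq_add_of_le' hα
    rw [hN, Nat.add_sub_cancel, pow_succ]; ring
  have hq₁_le : q₁ ≤ 2 ^ (α - 1) * q₁ * q₂ :=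
    (Nat.le_mul_of_pos_left q₁ (by positivity)).trans (Nat.le_mul_of_pos_right _ (by omega))
  have : NeZero N := ⟨by omega⟩
  have : Fact (2 < N) := ⟨by omega⟩
  have hr : r * r = 1 := sub_eq_zero.mp <| ZMod.eq_zero_of_castHom_eq_zero hN
    ((Nat.coprime_two_left.mpr hodd₁).pow_left α) ((Nat.coprime_two_left.mpr hodd₂).pow_left α)
    hcop hd₀ hd₁ hd₂ (by rw [map_sub, map_mul, map_one, hr₀]; ring)
    (by rw [map_sub, map_mul, map_one, hr₁]; ring) (by rw [map_sub, map_mul, map_one, hr₂]; ring)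
  have hbb : b + b = 0 := hb ▸ ZMod.natCast_add_self_eq_zero hhalf
  have hb₀ : b ≠ 0 := hb ▸ ZMod.natCast_ne_zero_of_add_self_eq hhalf (by omega)
  have hb_reduce {q : ℕ} (hd : q ∣ N) (hq : q ∣ 2 ^ (α - 1) * q₁ * q₂) :
      ZMod.castHom hd (ZMod q) b = 0 := by
    rwa [hb, map_natCast, ZMod.natCast_eq_zero_iff]
  refine ⟨SpecialLinearGroup.upperScalarKleinFour hr hbb,
    fun g ↦ SpecialLinearGroup.mem_upperScalarKleinFour_iff_coe_mem, ?_, fun g hg ↦ ?_⟩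
  · have := SpecialLinearGroup.isKleinFour_upperScalarKleinFour hr hbb ZMod.neg_one_ne_one hb₀
    exact IsKleinFour.nonempty_mulEquiv
  have h2 : 2 ∣ N := (dvd_pow_self 2 (by omega)).trans hd₀
  rcases SpecialLinearGroup.mem_upperScalarKleinFour.mp hg with rfl | rfl | rfl | rfl
  · exact ⟨2, Nat.prime_two, h2, map_one _⟩
  · exact ⟨2, Nat.prime_two, h2, SpecialLinearGroup.map_neg_one_eq_one _⟩
  · exact SpecialLinearGroup.exists_prime_map_castHom_eq_one hq₁.ne' hd₁
      (SpecialLinearGroup.map_upperScalar_eq_one _ hr hr₁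
        (hb_reduce hd₁ (dvd_mul_of_dvd_left (dvd_mul_left q₁ _) q₂)))
  · exact SpecialLinearGroup.exists_prime_map_castHom_eq_one hq₂.ne' hd₂
      (SpecialLinearGroup.map_upperScalar_eq_one _ _ (by rw [map_neg, hr₂, neg_neg])
        (hb_reduce hd₂ (dvd_mul_left q₂ _)))
end

section
/- Let K = 𝔽₅(t), p(t) = t³ − t² + 2t, q(t) = 2t⁶ + t⁵ + t − 1, and let E : y² = x³ + p(t)x + q(t). The polynomial X² − 2 is irreducible over K; let L = K(s) with s² = 2, a degree-2 extension of K. Then the four affine points (−1, ±s(t³ − t² + 2t − 2)) and (−2t², ±2(t³ − 2t² + 2t + 1)) lie on E over L, each satisfies 3·P = O in the group E(L), and the 3-torsion subgroup {P ∈ E(L) : 3·P = O} has exactly 9 elements (i.e. all of the 3-torsion of E is rational over L). -/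
instance : Fact (Nat.Prime 5) := ⟨by norm_num⟩

/-!
A nonzero point `P = (x, y)` satisfies `3 • P = 0` exactly when `2 • P = -P`; comparing
`x`-coordinates, this says that `P ≠ -P` and that `x` is a root of the `3`-division polynomial
`ψ₃`. As `ψ₃` has degree `4` and each `x` carries at most two points, `E[3]` has at most
`1 + 2 · 4 = 9` elements. In characteristic `5` both `-1` and `-2t²` are roots of `ψ₃`, and the
given points over them have nonzero `y`, so they are two `3`-torsion points with distinct
`x`-coordinates; they are then independent over `𝔽₃`, whence `E[3]` has at least `3² = 9`
elements. Finally `2` is not a square in `𝔽₅(t)`: a square root would give one in `𝔽₅` on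
leading coefficients.
-/

open Polynomial

theorem RatFunc.not_isSquare_C {F : Type*} [Field F] {c : F} (hc : ¬IsSquare c) :
    ¬IsSquare (RatFunc.C c) := by
  rintro ⟨b, hb⟩
  have hden : algebraMap F[X] (RatFunc F) b.denom ≠ 0 := RatFunc.algebraMap_ne_zero b.denom_ne_zero
  have hpoly : b.num * b.num = Polynomial.C c * (b.denom * b.denom) := by
    apply IsFractionRing.injective F[X] (RatFunc F)
    rw [← RatFunc.num_div_denom b, div_mul_div_comm, eq_div_iff (mul_ne_zero hden hden)] at hb
    simpa only [map_mul, RatFunc.algebraMap_C] using hb.symm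
  have hlc := congrArg leadingCoeff hpoly
  simp only [leadingCoeff_mul, leadingCoeff_C] at hlc
  have hd : b.denom.leadingCoeff ≠ 0 := leadingCoeff_ne_zero.mpr b.denom_ne_zero
  exact hc ⟨b.num.leadingCoeff / b.denom.leadingCoeff, by field_simp; linear_combination hlc.symm⟩

theorem CharP.ofNat_ne_zero_of_not_dvd {R : Type*} [AddMonoidWithOne R] {p : ℕ} [CharP R p]
    {n : ℕ} [n.AtLeastTwo] (h : ¬p ∣ n) : (ofNat(n) : R) ≠ 0 :=
  fun h0 => h ((CharP.cast_eq_zero_iff R p n).mp (by exact_mod_cast h0))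

theorem RatFunc.eval₂_algebraMap_X_ne_zero {F L : Type*} [Field F] [Field L]
    [Algebra (RatFunc F) L] {f : F[X]} (hf : f ≠ 0) :
    f.eval₂ ((algebraMap (RatFunc F) L).comp (algebraMap F (RatFunc F)))
      (algebraMap (RatFunc F) L RatFunc.X) ≠ 0 := by
  rw [← hom_eval₂, ← aeval_def, RatFunc.aeval_X_left_eq_algebraMap]
  exact (_root_.map_ne_zero _).mpr (RatFunc.algebraMap_ne_zero hf)

theorem nine_le_card_three_torsion {G : Type*} [AddCommGroup G] [Finite {P : G // 3 • P = 0}]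
    {a b : G} (ha : 3 • a = 0) (hb : 3 • b = 0) (ha0 : a ≠ 0) (hb0 : b ≠ 0) (hba : b ≠ a)
    (hba' : b ≠ -a) : 9 ≤ Nat.card {P : G // 3 • P = 0} := by
  let H := (nsmulAddMonoidHom 3 : G →+ G).ker
  let : Module (ZMod 3) H := AddCommGroup.zmodModule fun x => Subtype.ext x.2
  have hind : LinearIndependent (ZMod 3) ![(⟨a, ha⟩ : H), ⟨b, hb⟩] := by
    refine (LinearIndependent.pair_iff' fun h => ha0 (congrArg Subtype.val h)).mpr fun c hc => ?_
    replace hc : c.val • a = b := congrArg Subtype.val hc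
    fin_cases c
    · exact hb0 (hc.symm.trans (zero_nsmul a))
    · exact hba (hc.symm.trans (one_nsmul a))
    · exact hba' (hc.symm.trans (eq_neg_of_add_eq_zero_left (by rwa [← succ_nsmul])))
  have : Fintype H := @Fintype.ofFinite H ‹Finite {P : G // 3 • P = 0}›
  calc 9 = 3 ^ 2 := rfl
    _ ≤ 3 ^ Module.finrank (ZMod 3) H :=
      Nat.pow_le_pow_right (by norm_num) (by simpa using hind.fintype_card_le_finrank)
    _ = Nat.card H := by
      rw [Nat.card_eq_fintype_card, Module.card_eq_pow_finrank (K := ZMod 3), ZMod.card]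
    _ = Nat.card {P : G // 3 • P = 0} := rfl

namespace WeierstrassCurve.Affine

variable {F : Type*} [Field F] [DecidableEq F] {W : WeierstrassCurve.Affine F}

lemma addX_self_eq_iff {x y : F} (h : W.Equation x y) (hy : y ≠ W.negY x y) :
    W.addX x x (W.slope x x y y) = x ↔ W.Ψ₃.eval x = 0 := by
  have hD : y - W.negY x y ≠ 0 := sub_ne_zero.mpr hy
  have key : W.addX x x (W.slope x x y y) - x = -W.Ψ₃.eval x / (y - W.negY x y) ^ 2 := by
    rw [equation_iff] at h
    rw [slope_of_Y_ne rfl hy, addX, eq_div_iff (pow_ne_zero 2 hD)]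
    field_simp
    simp only [WeierstrassCurve.Ψ₃, b₂, b₄, b₆, b₈, negY, eval_add, eval_mul, eval_pow, eval_C,
      eval_X, eval_ofNat]
    linear_combination (-W.a₁ ^ 2 - 4 * W.a₂ - 12 * x) * h
  rw [← sub_eq_zero, key, div_eq_zero_iff, neg_eq_zero, or_iff_left (pow_ne_zero 2 hD)]

namespace Point

lemma three_nsmul_some_eq_zero_iff {x y : F} (h : W.Nonsingular x y) :
    3 • some x y h = 0 ↔ y ≠ W.negY x y ∧ W.Ψ₃.eval x = 0 := by
  rw [show 3 • some x y h = some x y h + some x y h + some x y h by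
      rw [succ_nsmul, two_nsmul], add_eq_zero_iff_eq_neg]
  by_cases hy : y = W.negY x y
  · rw [add_self_of_Y_eq hy, eq_comm, neg_eq_zero]
    exact iff_of_false (some_ne_zero h) fun H => H.1 hy
  · rw [add_self_of_Y_ne hy, neg_some, some.injEq, ← addX_self_eq_iff h.1 hy]
    refine ⟨fun H => ⟨hy, H.1⟩, fun H => ⟨H.2, ?_⟩⟩
    rw [addY, negAddY, H.2, sub_self, mul_zero, zero_add]

lemma exists_three_nsmul_some_eq_zero {x y : F} (h : W.Equation x y) (hy : y ≠ W.negY x y)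
    (hx : W.Ψ₃.eval x = 0) : ∃ h : W.Nonsingular x y, 3 • some x y h = 0 :=
  have hns : W.Nonsingular x y := (nonsingular_iff x y).mpr ⟨h, Or.inr hy⟩
  ⟨hns, (three_nsmul_some_eq_zero_iff hns).mpr ⟨hy, hx⟩⟩

end Point

lemma card_toFinset_roots_map_polynomial_le (x : F) :
    (W.polynomial.map (evalRingHom x)).roots.toFinset.card ≤ 2 :=
  (Multiset.toFinset_card_le _).trans <| (card_roots' _).trans
    ((W.monic_polynomial.natDegree_map _).trans W.natDegree_polynomial).le

lemma exists_injective_three_torsion (h3 : (3 : F) ≠ 0) : ∃ S : Finset (F × F), S.card ≤ 8 ∧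
    ∃ f : {P : W.Point // 3 • P = 0} → Option S, Function.Injective f := by
  let S : Finset (F × F) := W.Ψ₃.roots.toFinset.biUnion fun x =>
    (W.polynomial.map (evalRingHom x)).roots.toFinset.image (Prod.mk x)
  have hS : S.card ≤ 8 := calc
    S.card ≤ W.Ψ₃.roots.toFinset.card * 2 := Finset.card_biUnion_le_card_mul _ _ _ fun x _ =>
      Finset.card_image_le.trans (card_toFinset_roots_map_polynomial_le x)
    _ ≤ 4 * 2 := Nat.mul_le_mul_right 2 <|
      (Multiset.toFinset_card_le _).trans ((card_roots' _).trans W.natDegree_Ψ₃_le)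
  have mem {x y : F} (h : W.Nonsingular x y) (hP : 3 • Point.some x y h = 0) : (x, y) ∈ S := by
    obtain ⟨-, hx⟩ := (Point.three_nsmul_some_eq_zero_iff h).mp hP
    simp only [S, Finset.mem_biUnion, Finset.mem_image, Multiset.mem_toFinset]
    refine ⟨x, (mem_roots (W.Ψ₃_ne_zero h3)).mpr hx, y, ?_, rfl⟩
    exact (mem_roots (W.monic_polynomial.map _).ne_zero).mpr
      ((map_evalRingHom_eval x y _).trans h.1)
  let f : {P : W.Point // 3 • P = 0} → Option S
    | ⟨.zero, _⟩ => none
    | ⟨.some x y h, hP⟩ => some ⟨(x, y), mem h hP⟩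
  refine ⟨S, hS, f, ?_⟩
  rintro ⟨_ | ⟨x, y, h⟩, hP⟩ ⟨_ | ⟨x', y', h'⟩, hP'⟩ hff <;> simp_all [f]

theorem card_three_torsion_eq_nine (h3 : (3 : F) ≠ 0) {x₁ y₁ x₂ y₂ : F}
    {h₁ : W.Nonsingular x₁ y₁} {h₂ : W.Nonsingular x₂ y₂} (hP₁ : 3 • Point.some x₁ y₁ h₁ = 0)
    (hP₂ : 3 • Point.some x₂ y₂ h₂ = 0) (hx : x₂ ≠ x₁) :
    Nat.card {P : W.Point // 3 • P = 0} = 9 := by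
  obtain ⟨S, hS, f, hf⟩ := W.exists_injective_three_torsion h3
  have : Finite {P : W.Point // 3 • P = 0} := Finite.of_injective f hf
  obtain ⟨hne, hne'⟩ := not_or.mp (mt Point.X_eq_iff.mpr hx)
  refine le_antisymm ?_ (nine_le_card_three_torsion hP₁ hP₂ (Point.some_ne_zero h₁)
    (Point.some_ne_zero h₂) hne hne')
  calc Nat.card {P : W.Point // 3 • P = 0} ≤ Nat.card (Option S) :=
        Nat.card_le_card_of_injective f hf
    _ ≤ 9 := by simp only [Nat.card_eq_fintype_card, Fintype.card_option, Fintype.card_coe]; omega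

end WeierstrassCurve.Affine

section CharFive

open WeierstrassCurve.Affine

variable {L : Type*} [Field L]

def curveE (t : L) : WeierstrassCurve.Affine L :=
  ⟨0, 0, 0, t ^ 3 - t ^ 2 + 2 * t, 2 * t ^ 6 + t ^ 5 + t - 1⟩

lemma curveE_equation_iff {t x y : L} : (curveE t).Equation x y ↔
    y ^ 2 = x ^ 3 + (t ^ 3 - t ^ 2 + 2 * t) * x + (2 * t ^ 6 + t ^ 5 + t - 1) := by
  simp [equation_iff, curveE]

lemma eval_Ψ₃_curveE (t x : L) : (curveE t).Ψ₃.eval x = 3 * x ^ 4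
    + 6 * (t ^ 3 - t ^ 2 + 2 * t) * x ^ 2 + 12 * (2 * t ^ 6 + t ^ 5 + t - 1) * x
    - (t ^ 3 - t ^ 2 + 2 * t) ^ 2 := by
  simp only [WeierstrassCurve.Ψ₃, WeierstrassCurve.b₂, WeierstrassCurve.b₄, WeierstrassCurve.b₆,
    WeierstrassCurve.b₈, curveE, eval_add, eval_mul, eval_pow, eval_C, eval_X, eval_ofNat]
  ring

variable [CharP L 5]

lemma curveE_Y_ne_negY {t x y : L} (hy : y ≠ 0) : y ≠ (curveE t).negY x y := by
  intro h
  simp only [negY, curveE] at h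
  exact mul_ne_zero (CharP.ofNat_ne_zero_of_not_dvd (p := 5) (n := 2) (by decide)) hy
    (by linear_combination h)

variable [DecidableEq L]

lemma curveE_exists_three_torsion_neg_one {t y : L} (hy : y ≠ 0)
    (hy2 : y ^ 2 = 2 * (t ^ 3 - t ^ 2 + 2 * t - 2) ^ 2) :
    ∃ h : (curveE t).Nonsingular (-1) y, 3 • Point.some (-1) y h = 0 := by
  refine Point.exists_three_nsmul_some_eq_zero ?_ (curveE_Y_ne_negY hy) ?_
  · rw [curveE_equation_iff]
    linear_combination (norm := ring_nf) hy2
    reduce_mod_char!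
  · rw [eval_Ψ₃_curveE]
    ring_nf
    reduce_mod_char!

lemma curveE_exists_three_torsion_neg_two_mul_sq {t y : L} (hy : y ≠ 0)
    (hy2 : y ^ 2 = 4 * (t ^ 3 - 2 * t ^ 2 + 2 * t + 1) ^ 2) :
    ∃ h : (curveE t).Nonsingular (-2 * t ^ 2) y, 3 • Point.some (-2 * t ^ 2) y h = 0 := by
  refine Point.exists_three_nsmul_some_eq_zero ?_ (curveE_Y_ne_negY hy) ?_
  · rw [curveE_equation_iff]
    linear_combination (norm := ring_nf) hy2
    reduce_mod_char!
  · rw [eval_Ψ₃_curveE]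
    ring_nf
    reduce_mod_char!

end CharFive

open Classical in
open Polynomial in
/-- Over `K = 𝔽₅(t)`, with `p = t³ - t² + 2t`, `q = 2t⁶ + t⁵ + t - 1` and
`E : y² = x³ + p x + q`, the polynomial `X² - 2` is irreducible over `K`; and over any field
`L = K(s)` of degree `2` over `K` with `s² = 2`, the four points
`(-1, ±s(t³ - t² + 2t - 2))` and `(-2t², ±2(t³ - 2t² + 2t + 1))` lie on `E`, are killed by `3`,
and the `3`-torsion subgroup of `E(L)` has exactly `9` elements. -/
theorem stmt_15 (p q : RatFunc (ZMod 5))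
    (hp : p = RatFunc.X ^ 3 - RatFunc.X ^ 2 + 2 * RatFunc.X)
    (hq : q = 2 * RatFunc.X ^ 6 + RatFunc.X ^ 5 + RatFunc.X - 1) :
    Irreducible (X ^ 2 - C (2 : RatFunc (ZMod 5))) ∧
      ∀ (L : Type) [Field L] [Algebra (RatFunc (ZMod 5)) L],
        Module.finrank (RatFunc (ZMod 5)) L = 2 →
        ∀ s : L, s ^ 2 = 2 →
        ∀ (W : WeierstrassCurve.Affine L),
          W = ⟨0, 0, 0, algebraMap (RatFunc (ZMod 5)) L p, algebraMap (RatFunc (ZMod 5)) L q⟩ →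
        ∀ t : L, t = algebraMap (RatFunc (ZMod 5)) L RatFunc.X →
          ((∃ h : W.Nonsingular (-1) (s * (t ^ 3 - t ^ 2 + 2 * t - 2)),
              3 • (WeierstrassCurve.Affine.Point.some _ _ h) = 0) ∧
            (∃ h : W.Nonsingular (-1) (-(s * (t ^ 3 - t ^ 2 + 2 * t - 2))),
              3 • (WeierstrassCurve.Affine.Point.some _ _ h) = 0) ∧
            (∃ h : W.Nonsingular (-2 * t ^ 2) (2 * (t ^ 3 - 2 * t ^ 2 + 2 * t + 1)),
              3 • (WeierstrassCurve.Affine.Point.some _ _ h) = 0) ∧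
            (∃ h : W.Nonsingular (-2 * t ^ 2) (-(2 * (t ^ 3 - 2 * t ^ 2 + 2 * t + 1))),
              3 • (WeierstrassCurve.Affine.Point.some _ _ h) = 0) ∧
            Nat.card {P : W.Point // 3 • P = 0} = 9) := by
  refine ⟨X_pow_sub_C_irreducible_of_prime Nat.prime_two fun b hb =>
    RatFunc.not_isSquare_C (c := (2 : ZMod 5)) (by decide) ⟨b, by rw [← sq, hb, map_ofNat]⟩, ?_⟩
  intro L _ _ _ s hs W hW t ht
  have : CharP L 5 := charP_of_injective_algebraMap (algebraMap (RatFunc (ZMod 5)) L).injective 5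
  have hWE : W = curveE t := by
    rw [hW, curveE, hp, hq, ht]
    simp only [map_add, map_sub, map_mul, map_pow, map_ofNat, map_one]
  subst hWE
  have poly_ne_zero {f : (ZMod 5)[X]} (hf : f.eval 0 ≠ 0) :=
    RatFunc.eval₂_algebraMap_X_ne_zero (L := L) (f := f) fun h => hf (by rw [h, eval_zero])
  have hu := poly_ne_zero (f := X ^ 3 - X ^ 2 + 2 * X - 2) <| by
    simp only [eval_sub, eval_add, eval_mul, eval_pow, eval_X, eval_ofNat]; decide
  have hv := poly_ne_zero (f := X ^ 3 - 2 * X ^ 2 + 2 * X + 1) (by simp)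
  have hd := poly_ne_zero (f := 2 * X ^ 2 - 1) (by simp)
  simp only [eval₂_sub, eval₂_add, eval₂_mul, eval₂_X_pow, eval₂_X, eval₂_ofNat, eval₂_one, ← ht]
    at hu hv hd
  have h2 : (2 : L) ≠ 0 := CharP.ofNat_ne_zero_of_not_dvd (p := 5) (by decide)
  have h3 : (3 : L) ≠ 0 := CharP.ofNat_ne_zero_of_not_dvd (p := 5) (by decide)
  have hs0 : s ≠ 0 := by rintro rfl; exact h2 (by rw [← hs]; ring)
  obtain ⟨h₁, tor₁⟩ := curveE_exists_three_torsion_neg_one (t := t) (mul_ne_zero hs0 hu)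
    (by rw [mul_pow, hs])
  obtain ⟨h₁', tor₁'⟩ := curveE_exists_three_torsion_neg_one (t := t)
    (neg_ne_zero.mpr (mul_ne_zero hs0 hu)) (by rw [neg_sq, mul_pow, hs])
  obtain ⟨h₂, tor₂⟩ := curveE_exists_three_torsion_neg_two_mul_sq (mul_ne_zero h2 hv) (by ring)
  obtain ⟨h₂', tor₂'⟩ := curveE_exists_three_torsion_neg_two_mul_sq
    (neg_ne_zero.mpr (mul_ne_zero h2 hv)) (by ring)
  exact ⟨⟨h₁, tor₁⟩, ⟨h₁', tor₁'⟩, ⟨h₂, tor₂⟩, ⟨h₂', tor₂'⟩,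
    WeierstrassCurve.Affine.card_three_torsion_eq_nine h3 tor₁ tor₂
      fun h => hd (by linear_combination -h)⟩
end
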